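/- Let q = (q₁,q₂,q₃,q₄) ∈ ℝ⁴ be the coefficient vector of a binary cubic with positive discriminant, i.e. Δ₃(q) = q₂²q₃² − 4q₁q₃³ − 4q₂³q₄ + 18q₁q₂q₃q₄ − 27q₁²q₄² > 0. Then there exist x,y,z,w ∈ ℝ with xw − yz ≠ 0 such that Q(x,y,z,w) = q, where Q(x,y,z,w) is the binary cubic (1/3)(xu₁+yu₂)³ − (xu₁+yu₂)(zu₁+wu₂)², i.e. (q₁,q₂,q₃,q₄) = (x³/3 − xz², x²y − 2xzw − yz², xy² − xw² − 2yzw, y³/3 − yw²). -/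

import Mathlib

noncomputable section

/-- The discriminant of a binary cubic `q 0 • u₁³ + q 1 • u₁²u₂ + q 2 • u₁u₂² + q 3 • u₂³`. -/
def disc3 (q : Fin 4 → ℝ) : ℝ :=
  q 1 ^ 2 * q 2 ^ 2 - 4 * q 0 * q 2 ^ 3 - 4 * q 1 ^ 3 * q 3 +
    18 * q 0 * q 1 * q 2 * q 3 - 27 * q 0 ^ 2 * q 3 ^ 2

/-- The coefficient vector of the binary cubic
`Q(x,y,z,w) = (1/3)(x u₁ + y u₂)³ − (x u₁ + y u₂)(z u₁ + w u₂)²`. -/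
def Qcoeff (x y z w : ℝ) : Fin 4 → ℝ :=
  ![x ^ 3 / 3 - x * z ^ 2, x ^ 2 * y - 2 * x * z * w - y * z ^ 2,
    x * y ^ 2 - x * w ^ 2 - 2 * y * z * w, y ^ 3 / 3 - y * w ^ 2]

/-!
Writing `L = x u₁ + y u₂` and `M = z u₁ + w u₂`, the cubic `Q` is `⅓ · L (L - √3 M) (L + √3 M)`:
a product of three linear forms, the first being the average of the other two. Conversely, a
real binary cubic of positive discriminant has a real linear factor (a real cubic has a real
root), and the complementary quadratic factor then has positive discriminant, so the cubic is a
product `ℓ₁ ℓ₂ ℓ₃` of pairwise independent real linear forms. Writing `ℓ₁ = μ ℓ₂ + ν ℓ₃` with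
`μ ν ≠ 0`, the forms `λ ℓ₁`, `2λμ ℓ₂`, `2λν ℓ₃` have the required shape, and the cube root `λ`
with `4 λ³ μ ν = 3` fixes the normalization.
-/

open Filter Polynomial

lemma tendsto_monic_cubic_atTop (b c d : ℝ) :
    Tendsto (fun t : ℝ => t ^ 3 + b * t ^ 2 + c * t + d) atTop atTop := by
  have hP : (fun t : ℝ => t ^ 3 + b * t ^ 2 + c * t + d) =
      fun t => (C 1 * X ^ 3 + C b * X ^ 2 + C c * X + C d).eval t := by
    ext t; simp
  rw [hP]
  apply tendsto_atTop_of_leadingCoeff_nonneg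
  · rw [degree_cubic one_ne_zero]; norm_num
  · rw [leadingCoeff_cubic one_ne_zero]; norm_num

lemma exists_root_monic_cubic (b c d : ℝ) : ∃ r : ℝ, r ^ 3 + b * r ^ 2 + c * r + d = 0 := by
  have hcont : Continuous fun t : ℝ => t ^ 3 + b * t ^ 2 + c * t + d := by fun_prop
  have hbot : Tendsto (fun t : ℝ => t ^ 3 + b * t ^ 2 + c * t + d) atBot atBot := by
    convert (tendsto_neg_atTop_atBot.comp (tendsto_monic_cubic_atTop (-b) c (-d))).comp
      tendsto_neg_atBot_atTop using 1
    ext t; simp only [Function.comp]; ring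
  exact hcont.surjective (tendsto_monic_cubic_atTop b c d) hbot 0

/- A linear form `a u₁ + b u₂` is encoded by the pair `(a, b)`, a binary quadratic
`g 0 u₁² + g 1 u₁u₂ + g 2 u₂²` by `g : Fin 3 → ℝ`, and binary cubics as in `disc3`. -/
namespace BinaryForm

def det2 (ℓ m : ℝ × ℝ) : ℝ := ℓ.1 * m.2 - ℓ.2 * m.1

def quadMul (ℓ m : ℝ × ℝ) : Fin 3 → ℝ :=
  ![ℓ.1 * m.1, ℓ.1 * m.2 + ℓ.2 * m.1, ℓ.2 * m.2]

def cubicMul (ℓ : ℝ × ℝ) (g : Fin 3 → ℝ) : Fin 4 → ℝ :=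
  ![ℓ.1 * g 0, ℓ.1 * g 1 + ℓ.2 * g 0, ℓ.1 * g 2 + ℓ.2 * g 1, ℓ.2 * g 2]

/- The squared factor is `g` evaluated at the zero `(ℓ.2, -ℓ.1)` of `ℓ`. -/
lemma disc3_cubicMul (ℓ : ℝ × ℝ) (g : Fin 3 → ℝ) :
    disc3 (cubicMul ℓ g) =
      discrim (g 0) (g 1) (g 2) * (g 0 * ℓ.2 ^ 2 - g 1 * ℓ.1 * ℓ.2 + g 2 * ℓ.1 ^ 2) ^ 2 := by
  simp only [disc3, cubicMul, discrim, Matrix.cons_val]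
  ring

lemma disc3_cubicMul_quadMul (ℓ₁ ℓ₂ ℓ₃ : ℝ × ℝ) :
    disc3 (cubicMul ℓ₁ (quadMul ℓ₂ ℓ₃)) = (det2 ℓ₁ ℓ₂ * det2 ℓ₁ ℓ₃ * det2 ℓ₂ ℓ₃) ^ 2 := by
  simp only [disc3, cubicMul, quadMul, det2, Matrix.cons_val]
  ring

lemma exists_cubicMul_eq (q : Fin 4 → ℝ) : ∃ ℓ g, cubicMul ℓ g = q := by
  by_cases hq : q 0 = 0
  · refine ⟨(0, 1), ![q 1, q 2, q 3], ?_⟩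
    ext i; fin_cases i <;> simp [cubicMul, hq]
  · obtain ⟨r, hr⟩ := exists_root_monic_cubic (q 1 / q 0) (q 2 / q 0) (q 3 / q 0)
    have hroot : q 0 * r ^ 3 + q 1 * r ^ 2 + q 2 * r + q 3 = 0 := by
      field_simp at hr; linear_combination hr
    refine ⟨(1, -r), ![q 0, q 1 + q 0 * r, q 2 + q 1 * r + q 0 * r ^ 2], ?_⟩
    ext i; fin_cases i <;>
      simp only [cubicMul, Fin.zero_eta, Fin.mk_one, Fin.reduceFinMk, Matrix.cons_val]
    · ring
    · ring
    · ring
    · linear_combination -hroot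

lemma exists_quadMul_eq (g : Fin 3 → ℝ) (hg : 0 ≤ discrim (g 0) (g 1) (g 2)) :
    ∃ ℓ m, quadMul ℓ m = g := by
  by_cases hg₀ : g 0 = 0
  · refine ⟨(0, 1), (g 1, g 2), ?_⟩
    ext i; fin_cases i <;> simp [quadMul, hg₀]
  · set s := √(discrim (g 0) (g 1) (g 2))
    have hs : s ^ 2 = g 1 ^ 2 - 4 * g 0 * g 2 := Real.sq_sqrt hg
    refine ⟨(2 * g 0, g 1 - s), (1 / 2, (g 1 + s) / (4 * g 0)), ?_⟩
    ext i; fin_cases i <;>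
      simp only [quadMul, Fin.zero_eta, Fin.mk_one, Fin.reduceFinMk, Matrix.cons_val] <;>
      field_simp
    · ring
    · linear_combination -hs

lemma exists_cubicMul_quadMul_eq (q : Fin 4 → ℝ) (hq : 0 < disc3 q) :
    ∃ ℓ₁ ℓ₂ ℓ₃, cubicMul ℓ₁ (quadMul ℓ₂ ℓ₃) = q := by
  obtain ⟨ℓ₁, g, rfl⟩ := exists_cubicMul_eq q
  rw [disc3_cubicMul] at hq
  obtain ⟨ℓ₂, ℓ₃, rfl⟩ := exists_quadMul_eq g (pos_of_mul_pos_left hq (sq_nonneg _)).le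
  exact ⟨ℓ₁, ℓ₂, ℓ₃, rfl⟩

lemma cubicMul_smul_quadMul_smul (a b c : ℝ) (ℓ₁ ℓ₂ ℓ₃ : ℝ × ℝ) :
    cubicMul (a • ℓ₁) (quadMul (b • ℓ₂) (c • ℓ₃)) = (a * b * c) • cubicMul ℓ₁ (quadMul ℓ₂ ℓ₃) := by
  ext i; fin_cases i <;>
    simp only [cubicMul, quadMul, Fin.zero_eta, Fin.mk_one, Fin.reduceFinMk, Matrix.cons_val,
      Pi.smul_apply, Prod.smul_fst, Prod.smul_snd, smul_eq_mul] <;>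
    ring

lemma Qcoeff_div_sqrt_three (L M : ℝ × ℝ) :
    Qcoeff L.1 L.2 (M.1 / √3) (M.2 / √3) = (3 : ℝ)⁻¹ • cubicMul L (quadMul (L - M) (L + M)) := by
  have h3 : √3 ^ 2 = 3 := Real.sq_sqrt (by norm_num)
  ext i; fin_cases i <;>
    simp only [Qcoeff, cubicMul, quadMul, Fin.zero_eta, Fin.mk_one, Fin.reduceFinMk,
      Matrix.cons_val, Pi.smul_apply, Prod.fst_sub, Prod.snd_sub, Prod.fst_add, Prod.snd_add,
      smul_eq_mul] <;>
    field_simp <;> rw [h3] <;> ring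

lemma det2_smul_eq_sub (ℓ₁ ℓ₂ ℓ₃ : ℝ × ℝ) :
    det2 ℓ₂ ℓ₃ • ℓ₁ = det2 ℓ₁ ℓ₃ • ℓ₂ - det2 ℓ₁ ℓ₂ • ℓ₃ := by
  ext <;> simp only [det2, Prod.smul_fst, Prod.smul_snd, Prod.fst_sub, Prod.snd_sub,
    smul_eq_mul] <;> ring

lemma exists_Qcoeff_eq_cubicMul_quadMul (ℓ₁ ℓ₂ ℓ₃ : ℝ × ℝ) (h₁₂ : det2 ℓ₁ ℓ₂ ≠ 0)
    (h₁₃ : det2 ℓ₁ ℓ₃ ≠ 0) (h₂₃ : det2 ℓ₂ ℓ₃ ≠ 0) :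
    ∃ x y z w : ℝ, x * w - y * z ≠ 0 ∧ Qcoeff x y z w = cubicMul ℓ₁ (quadMul ℓ₂ ℓ₃) := by
  set μ := det2 ℓ₁ ℓ₃ / det2 ℓ₂ ℓ₃
  set ν := -det2 ℓ₁ ℓ₂ / det2 ℓ₂ ℓ₃
  have hμ : μ ≠ 0 := div_ne_zero h₁₃ h₂₃
  have hν : ν ≠ 0 := div_ne_zero (neg_ne_zero.mpr h₁₂) h₂₃
  have hℓ₁ : ℓ₁ = μ • ℓ₂ + ν • ℓ₃ := by
    rw [← inv_smul_smul₀ h₂₃ ℓ₁, det2_smul_eq_sub]; module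
  obtain ⟨t, ht⟩ := exists_root_monic_cubic 0 0 (-(3 / (4 * μ * ν)))
  have hscale : t * (2 * t * μ) * (2 * t * ν) = 3 := by
    field_simp at ht; linear_combination ht
  have ht₀ : t ≠ 0 := by rintro rfl; norm_num at hscale
  set M := t • (ν • ℓ₃ - μ • ℓ₂)
  refine ⟨(t • ℓ₁).1, (t • ℓ₁).2, M.1 / √3, M.2 / √3, ?_, ?_⟩
  · have hdet : det2 (t • ℓ₁) M = 2 * t ^ 2 * μ * ν * det2 ℓ₂ ℓ₃ := by
      simp only [M, hℓ₁, det2, Prod.fst_add, Prod.snd_add, Prod.fst_sub, Prod.snd_sub,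
        Prod.smul_fst, Prod.smul_snd, smul_eq_mul]
      ring
    have hxy : (t • ℓ₁).1 * (M.2 / √3) - (t • ℓ₁).2 * (M.1 / √3) = det2 (t • ℓ₁) M / √3 := by
      rw [det2]; ring
    rw [hxy, hdet]
    positivity
  · have hminus : t • ℓ₁ - M = (2 * t * μ) • ℓ₂ := by rw [hℓ₁]; module
    have hplus : t • ℓ₁ + M = (2 * t * ν) • ℓ₃ := by rw [hℓ₁]; module
    rw [Qcoeff_div_sqrt_three, hminus, hplus, cubicMul_smul_quadMul_smul, hscale, smul_smul,
      inv_mul_cancel₀ three_ne_zero, one_smul]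

end BinaryForm

open BinaryForm

theorem stmt16 (q : Fin 4 → ℝ) (hq : 0 < disc3 q) :
    ∃ x y z w : ℝ, x * w - y * z ≠ 0 ∧ Qcoeff x y z w = q := by
  obtain ⟨ℓ₁, ℓ₂, ℓ₃, rfl⟩ := exists_cubicMul_quadMul_eq q hq
  rw [disc3_cubicMul_quadMul] at hq
  obtain ⟨⟨h₁₂, h₁₃⟩, h₂₃⟩ := (mul_ne_zero_iff.mp (sq_pos_iff.mp hq)).imp_left mul_ne_zero_iff.mp
  exact exists_Qcoeff_eq_cubicMul_quadMul ℓ₁ ℓ₂ ℓ₃ h₁₂ h₁₃ h₂₃
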